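/- Weighted aggregation of Bregman distances under smoothness: let g : ℝⁿ → ℝᵐ be a vector function whose components are convex with g L_g-Lipschitz-smooth in the operator-norm sense (‖g'(y) − g'(ȳ)‖ ≤ L_g‖y − ȳ‖), let g* and D_{g*} denote the componentwise conjugate and componentwise conjugate Bregman distance. Then for any nonnegative weight vector w ∈ ℝ₊ᵐ and any π̄ = g'(ȳ), π = g'(y): ‖w‖ · wᵀ D_{g*}(π̄, π) ≥ ‖wᵀ(π̄ − π)‖² / (2 L_g). -/

import Mathlib

/-!
At gradient points the Fenchel–Young equality turns each conjugate Bregman distance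
`D_{g_j*}(π̄_j, π_j)` into the primal one `D_{g_j}(ȳ, y)`, so `wᵀ D_{g*}(π̄, π) = D_f(ȳ, y)` for the
convex function `f = ∑ w_j g_j`, whose gradient `∑ w_j ∇g_j` is `‖w‖ L_g`-Lipschitz by the
operator-norm bound applied to `w / ‖w‖`. The claim is then the co-coercivity estimate
`‖∇f ȳ - ∇f y‖² ≤ 2 L D_f(ȳ, y)` of a convex `L`-smooth function, which follows by comparing the
first-order lower bound at `y` with the descent-lemma upper bound at `ȳ` in the gradient step
`ȳ - L⁻¹ (∇f ȳ - ∇f y)`.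
-/

open Finset

open scoped RealInnerProductSpace

theorem convexOn_weightedSum {ι E : Type*} [Fintype ι] [AddCommGroup E] [Module ℝ E]
    {g : ι → E → ℝ} {w : ι → ℝ} (hw : ∀ j, 0 ≤ w j) (hg : ∀ j, ConvexOn ℝ Set.univ (g j)) :
    ConvexOn ℝ Set.univ (fun x => ∑ j, w j * g j x) := by
  have := Finset.sum_induction (s := univ) (fun j x => w j * g j x) (ConvexOn ℝ Set.univ)
    (fun _ _ => ConvexOn.add) (convexOn_const 0 convex_univ) (fun j _ => (hg j).smul (hw j))
  simpa only [Finset.sum_fn] using this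

theorem norm_sum_smul_le_sqrt_mul {ι V : Type*} [Fintype ι] [SeminormedAddCommGroup V]
    [NormedSpace ℝ V] {X : ι → V} {C : ℝ}
    (h : ∀ v : ι → ℝ, ∑ j, v j ^ 2 ≤ 1 → ‖∑ j, v j • X j‖ ≤ C) (w : ι → ℝ) :
    ‖∑ j, w j • X j‖ ≤ √(∑ j, w j ^ 2) * C := by
  set W := √(∑ j, w j ^ 2)
  have hsq : ∑ j, w j ^ 2 = W ^ 2 := (Real.sq_sqrt (by positivity)).symm
  have hW0 : 0 ≤ W := Real.sqrt_nonneg _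
  rcases hW0.eq_or_lt with hW | hW
  · have hw : ∀ j, w j = 0 := fun j => by
      have := (Finset.sum_eq_zero_iff_of_nonneg fun j _ => sq_nonneg (w j)).1
        (by rw [hsq, ← hW]; ring) j (Finset.mem_univ j)
      exact pow_eq_zero_iff two_ne_zero |>.1 this
    simp [hw, ← hW]
  have hv : ∑ j, (W⁻¹ * w j) ^ 2 ≤ 1 := by
    simp only [mul_pow, ← Finset.mul_sum, hsq, inv_pow]
    rw [inv_mul_cancel₀ (by positivity)]
  have hrescale : ∑ j, w j • X j = W • ∑ j, (W⁻¹ * w j) • X j := by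
    simp only [Finset.smul_sum, smul_smul, mul_inv_cancel_left₀ hW.ne']
  rw [hrescale, norm_smul, Real.norm_of_nonneg hW.le]
  exact mul_le_mul_of_nonneg_left (h _ hv) hW.le

theorem image_one_le_of_deriv_le_linear {φ φ' : ℝ → ℝ} {K : ℝ}
    (hφ : ∀ t, HasDerivAt φ (φ' t) t) (hφ' : ∀ t ∈ Set.Ico (0 : ℝ) 1, φ' t ≤ φ' 0 + K * t) :
    φ 1 ≤ φ 0 + φ' 0 + K / 2 := by
  have hB : ∀ t, HasDerivAt (fun t => φ 0 + φ' 0 * t + K / 2 * t ^ 2) (φ' 0 + K * t) t := by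
    intro t
    exact ((((hasDerivAt_id' t).const_mul (φ' 0)).const_add (φ 0)).add
      ((hasDerivAt_pow 2 t).const_mul (K / 2))).congr_deriv (by ring)
  have := image_le_of_deriv_right_le_deriv_boundary
    (fun t _ => (hφ t).continuousAt.continuousWithinAt) (fun t _ => (hφ t).hasDerivWithinAt)
    (by simp) (fun t _ => (hB t).continuousAt.continuousWithinAt)
    (fun t _ => (hB t).hasDerivWithinAt) hφ' (Set.right_mem_Icc.2 zero_le_one)
  simpa using this

section Bregman

variable {E : Type*} [NormedAddCommGroup E] [InnerProductSpace ℝ E]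

def bregmanDiv (f : E → ℝ) (F : E → E) (x y : E) : ℝ := f x - f y - ⟪F y, x - y⟫

theorem bregmanDiv_weightedSum {ι : Type*} [Fintype ι] (g : ι → E → ℝ) (G : ι → E → E)
    (w : ι → ℝ) (x y : E) :
    bregmanDiv (fun x => ∑ j, w j * g j x) (fun x => ∑ j, w j • G j x) x y =
      ∑ j, w j * bregmanDiv (g j) (G j) x y := by
  simp only [bregmanDiv, sum_inner, real_inner_smul_left, ← Finset.sum_sub_distrib]
  exact Finset.sum_congr rfl fun j _ => by ring

theorem bregmanDiv_eq_of_fenchelYoung {f fstar : E → ℝ} {F : E → E} {x y : E}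
    (hy : fstar (F y) = ⟪F y, y⟫ - f y) (hx : fstar (F x) = ⟪F x, x⟫ - f x) :
    fstar (F y) - fstar (F x) - ⟪x, F y - F x⟫ = bregmanDiv f F x y := by
  rw [hy, hx, bregmanDiv, inner_sub_right, inner_sub_right, real_inner_comm x, real_inner_comm x]
  ring

variable [CompleteSpace E]

theorem HasGradientAt.weightedSum {ι : Type*} [Fintype ι] {g : ι → E → ℝ} {G : ι → E} {x : E}
    (w : ι → ℝ) (hg : ∀ j, HasGradientAt (g j) (G j) x) :
    HasGradientAt (fun x => ∑ j, w j * g j x) (∑ j, w j • G j) x := by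
  rw [hasGradientAt_iff_hasFDerivAt, map_sum]
  simp only [map_smul]
  exact HasFDerivAt.fun_sum fun j _ => (hg j).hasFDerivAt.const_mul (w j)

theorem ConvexOn.add_inner_sub_le_of_hasGradientAt {f : E → ℝ} {G y : E}
    (hf : ConvexOn ℝ Set.univ f) (h : HasGradientAt f G y) (x : E) :
    f y + ⟪G, x - y⟫ ≤ f x := by
  have hφ : ConvexOn ℝ Set.univ (f ∘ AffineMap.lineMap (k := ℝ) y x) := by
    simpa using hf.comp_affineMap (AffineMap.lineMap y x)
  have hd : HasDerivAt (f ∘ AffineMap.lineMap (k := ℝ) y x) ⟪G, x - y⟫ 0 := by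
    have hline : HasDerivAt (AffineMap.lineMap y x : ℝ → E) (x - y) 0 :=
      AffineMap.hasDerivAt_lineMap
    have hG : HasFDerivAt f (InnerProductSpace.toDual ℝ E G : E →L[ℝ] ℝ)
        (AffineMap.lineMap (k := ℝ) y x 0) := by simpa using h.hasFDerivAt
    simpa using hG.comp_hasDerivAt 0 hline
  have := hφ.le_slope_of_hasDerivAt (Set.mem_univ 0) (Set.mem_univ 1) zero_lt_one hd
  simp only [slope_def_field, Function.comp_apply, AffineMap.lineMap_apply_one,
    AffineMap.lineMap_apply_zero, sub_zero, div_one] at this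
  linarith

theorem bregmanDiv_le_of_lipschitz {f : E → ℝ} {F : E → E} {L : ℝ}
    (hF : ∀ x, HasGradientAt f (F x) x) (hlip : ∀ a b, ‖F a - F b‖ ≤ L * ‖a - b‖) (x z : E) :
    bregmanDiv f F x z ≤ L / 2 * ‖x - z‖ ^ 2 := by
  set d := x - z
  have hline : ∀ t : ℝ, HasDerivAt (fun t : ℝ => z + t • d) d t := fun t => by
    simpa using ((hasDerivAt_id t).smul_const d).const_add z
  have hφ : ∀ t : ℝ, HasDerivAt (fun t : ℝ => f (z + t • d)) ⟪F (z + t • d), d⟫ t := fun t => by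
    have := (hF (z + t • d)).hasFDerivAt.comp_hasDerivAt t (hline t)
    simp only [InnerProductSpace.toDual_apply_apply] at this
    exact this
  have hbound : ∀ t ∈ Set.Ico (0 : ℝ) 1,
      ⟪F (z + t • d), d⟫ ≤ ⟪F (z + (0 : ℝ) • d), d⟫ + L * ‖d‖ ^ 2 * t := by
    rintro t ⟨ht, -⟩
    have hlipt : ‖F (z + t • d) - F z‖ ≤ L * (t * ‖d‖) := by
      simpa [norm_smul, abs_of_nonneg ht] using hlip (z + t • d) z
    calc ⟪F (z + t • d), d⟫ = ⟪F z, d⟫ + ⟪F (z + t • d) - F z, d⟫ := by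
          rw [inner_sub_left]; ring
      _ ≤ ⟪F z, d⟫ + ‖F (z + t • d) - F z‖ * ‖d‖ := by gcongr; exact real_inner_le_norm _ _
      _ ≤ ⟪F z, d⟫ + L * (t * ‖d‖) * ‖d‖ := by gcongr
      _ = ⟪F (z + (0 : ℝ) • d), d⟫ + L * ‖d‖ ^ 2 * t := by rw [zero_smul, add_zero]; ring
  have := image_one_le_of_deriv_le_linear hφ hbound
  simp only [one_smul, zero_smul, add_zero, d, add_sub_cancel] at this
  unfold bregmanDiv
  linarith

theorem sq_norm_sub_le_two_mul_bregmanDiv {f : E → ℝ} {F : E → E} {L : ℝ}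
    (hf : ConvexOn ℝ Set.univ f) (hF : ∀ x, HasGradientAt f (F x) x) (hL : 0 ≤ L)
    (hlip : ∀ a b, ‖F a - F b‖ ≤ L * ‖a - b‖) (x y : E) :
    ‖F x - F y‖ ^ 2 ≤ 2 * L * bregmanDiv f F x y := by
  rcases hL.eq_or_lt with rfl | hL
  · have : ‖F x - F y‖ = 0 := le_antisymm (by simpa using hlip x y) (norm_nonneg _)
    simp [this]
  set d := F x - F y
  set x' := x - L⁻¹ • d
  have hlow := hf.add_inner_sub_le_of_hasGradientAt (hF y) x'
  have hup := bregmanDiv_le_of_lipschitz hF hlip x' x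
  have hx'x : x' - x = -(L⁻¹ • d) := by simp [x']
  have hx'y : x' - y = (x - y) - L⁻¹ • d := by simp only [x']; abel
  rw [bregmanDiv, hx'x] at hup
  rw [hx'y] at hlow
  simp only [inner_sub_right, inner_neg_right, real_inner_smul_right, norm_neg, norm_smul,
    Real.norm_eq_abs, abs_inv, abs_of_pos hL] at hup hlow
  have hd : ⟪F x, d⟫ - ⟪F y, d⟫ = ‖d‖ ^ 2 := by
    rw [← inner_sub_left, real_inner_self_eq_norm_sq]
  unfold bregmanDiv
  rw [inner_sub_right]
  field_simp at hup hlow ⊢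
  nlinarith

end Bregman

/-- Weighted aggregation of Bregman distances under smoothness: if `g : ℝⁿ → ℝᵐ` has
convex components and is `L_g`-Lipschitz-smooth in the operator-norm sense, then for any
nonnegative weight vector `w` and associated dual points `π̄ = g'(ȳ)`, `π = g'(y)`,
`‖w‖ · wᵀ D_{g*}(π̄, π) ≥ ‖wᵀ(π̄ − π)‖² / (2 L_g)`. -/
theorem stmt_6 {n m : ℕ}
    (g : EuclideanSpace ℝ (Fin n) → Fin m → ℝ)
    -- the rows of the Jacobian g'(y)
    (J : EuclideanSpace ℝ (Fin n) → Fin m → EuclideanSpace ℝ (Fin n))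
    (Lg : ℝ) (hLg : 0 < Lg)
    (hconv : ∀ j, ConvexOn ℝ Set.univ (fun y => g y j))
    (hgrad : ∀ y j, HasGradientAt (fun x => g x j) (J y j) y)
    -- ℓ₂ operator-norm smoothness: ‖g'(y) − g'(ȳ)‖ ≤ L_g ‖y − ȳ‖
    (hsm : ∀ y ybar (v : Fin m → ℝ), (∑ j, (v j)^2) ≤ 1 →
      ‖∑ j, v j • (J y j - J ybar j)‖ ≤ Lg * ‖y - ybar‖)
    -- componentwise conjugates, pinned down via Fenchel–Young at gradient points
    (gstar : Fin m → EuclideanSpace ℝ (Fin n) → ℝ)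
    (hFY : ∀ j y, gstar j (J y j) = (inner ℝ (J y j) y : ℝ) - g y j)
    (w : Fin m → ℝ) (hw : ∀ j, 0 ≤ w j)
    (y ybar : EuclideanSpace ℝ (Fin n)) :
    Real.sqrt (∑ j, (w j)^2) *
        (∑ j, w j *
          (gstar j (J y j) - gstar j (J ybar j) - (inner ℝ ybar (J y j - J ybar j) : ℝ)))
      ≥ ‖∑ j, w j • (J ybar j - J y j)‖^2 / (2 * Lg) := by
  set W := √(∑ j, w j ^ 2)
  have hlip : ∀ a b, ‖∑ j, w j • J a j - ∑ j, w j • J b j‖ ≤ W * Lg * ‖a - b‖ := fun a b => by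
    simpa only [← Finset.sum_sub_distrib, ← smul_sub, mul_assoc]
      using norm_sum_smul_le_sqrt_mul (hsm a b) w
  have key := sq_norm_sub_le_two_mul_bregmanDiv
    (convexOn_weightedSum (g := fun j x => g x j) hw hconv)
    (fun x => HasGradientAt.weightedSum w (hgrad x)) (by positivity) hlip ybar y
  rw [bregmanDiv_weightedSum] at key
  simp only [← Finset.sum_sub_distrib, ← smul_sub] at key
  have hconj : ∀ j, gstar j (J y j) - gstar j (J ybar j) - ⟪ybar, J y j - J ybar j⟫ =
      bregmanDiv (fun x => g x j) (fun x => J x j) ybar y :=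
    fun j => bregmanDiv_eq_of_fenchelYoung (fstar := gstar j) (F := fun x => J x j)
      (hFY j y) (hFY j ybar)
  simp only [hconj]
  rw [ge_iff_le, div_le_iff₀ (by positivity)]
  linarith
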